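/- Let Ξ and Υ be real n×k matrices of rank k, and let P = Ξ Υ^T have skinny singular value decomposition P = U S V^T, where U, V ∈ ℝ^{n×k} have orthonormal columns and S ∈ ℝ^{k×k} is an invertible diagonal matrix of the nonzero singular values of P. If W_Υ is any k×k orthogonal matrix satisfying V S^{-1} W_Υ = (Υ^T Υ)^{-1} (Ξ^T Ξ)^{-1/2}, then U W_Υ = Ξ (Ξ^T Ξ)^{-1/2}. -/
import Mathlib


open Matrix

private lemma isUnit_of_rank_eq_card {k : ℕ} (A : Matrix (Fin k) (Fin k) ℝ)
    (h : A.rank = k) : IsUnit A := by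
  rw [← Matrix.mulVec_surjective_iff_isUnit]
  have : LinearMap.range A.mulVecLin = ⊤ := by
    apply Submodule.eq_top_of_finrank_eq
    rw [Matrix.rank] at h
    simp [h]
  intro y
  exact (LinearMap.range_eq_top.mp this) y

/-- Let `Ξ, Υ` be real `n × k` matrices of rank `k` and let `P = Ξ Υᵀ` have a
skinny singular value decomposition `P = U S Vᵀ` (`Uᵀ U = Vᵀ V = I_k`, `S` invertible
diagonal with positive entries).  Let `SΞ` be the unique positive definite square root of
`Ξᵀ Ξ` (so `(ΞᵀΞ)^{-1/2} = SΞ⁻¹`).  If `W_Υ` is any orthogonal matrix satisfying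
`V S⁻¹ W_Υ = Υ (ΥᵀΥ)⁻¹ SΞ⁻¹` (the dimensionally consistent reading of the stated
equation), then `U W_Υ = Ξ SΞ⁻¹`. -/
theorem left_singvec_orient_eq_whitened
    (n k : ℕ)
    (Xi Ups : Matrix (Fin n) (Fin k) ℝ)
    (hXi : Xi.rank = k) (hUps : Ups.rank = k)
    (U V : Matrix (Fin n) (Fin k) ℝ) (s : Fin k → ℝ)
    (hU : Uᵀ * U = 1) (hV : Vᵀ * V = 1) (hs : ∀ i, 0 < s i)
    (hP : Xi * Upsᵀ = U * Matrix.diagonal s * Vᵀ)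
    (SXi : Matrix (Fin k) (Fin k) ℝ) (hSXi : SXi.PosDef) (hSXisq : SXi * SXi = Xiᵀ * Xi)
    (WUps : Matrix (Fin k) (Fin k) ℝ)
    (hWorth : WUps * WUpsᵀ = 1 ∧ WUpsᵀ * WUps = 1)
    (hW : V * (Matrix.diagonal s)⁻¹ * WUps = Ups * (Upsᵀ * Ups)⁻¹ * SXi⁻¹) :
    U * WUps = Xi * SXi⁻¹ := by
  have hSunit : IsUnit (Matrix.diagonal s) := by
    rw [Matrix.isUnit_iff_isUnit_det, Matrix.det_diagonal]
    exact isUnit_iff_ne_zero.mpr (ne_of_gt (Finset.prod_pos fun i _ => hs i))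
  have hGunit : IsUnit (Upsᵀ * Ups) := by
    apply isUnit_of_rank_eq_card
    rw [Matrix.rank_transpose_mul_self]
    exact hUps
  have hSinv : Matrix.diagonal s * (Matrix.diagonal s)⁻¹ = 1 :=
    Matrix.mul_nonsing_inv _ ((Matrix.isUnit_iff_isUnit_det _).mp hSunit)
  have hGinv : (Upsᵀ * Ups) * (Upsᵀ * Ups)⁻¹ = 1 :=
    Matrix.mul_nonsing_inv _ ((Matrix.isUnit_iff_isUnit_det _).mp hGunit)
  calc U * WUps
      = (U * Matrix.diagonal s * Vᵀ) * (V * (Matrix.diagonal s)⁻¹ * WUps) := by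
        simp only [Matrix.mul_assoc]
        rw [← Matrix.mul_assoc Vᵀ V, hV, Matrix.one_mul,
          ← Matrix.mul_assoc (Matrix.diagonal s), hSinv, Matrix.one_mul]
    _ = (Xi * Upsᵀ) * (Ups * (Upsᵀ * Ups)⁻¹ * SXi⁻¹) := by rw [← hP, hW]
    _ = Xi * ((Upsᵀ * Ups) * (Upsᵀ * Ups)⁻¹) * SXi⁻¹ := by
        simp only [Matrix.mul_assoc]
    _ = Xi * SXi⁻¹ := by rw [hGinv, Matrix.mul_one]
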